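/- arXiv:1110.3768 — 3 statements merged into one kernel-verified Lean document; each statement's English description precedes it below -/
import Mathlib

section
/- For all real numbers λ, μ > 0 and every σ with 0 < σ ≤ 1, the following inequality holds: (λ^(−1) + μ^(−1)) · (λ − μ) · (λ^σ − μ^σ) ≥ (λ^(−σ) + μ^(−σ)) · (λ^σ − μ^σ)². (This is the scalar inequality to which the key pointwise estimate (4.1), g^{jk̄}⟨h^{−1}D'h, D'h^σ⟩ ≥ |h^{−σ/2}∇h^σ|², reduces in a unitary eigenbasis of h, for each pair of eigenvalues λ, μ.) -/
lemma key_aux (l m σ : ℝ) (hl : 0 < l) (hm : 0 < m) (hσ0 : 0 < σ) (hσ1 : σ ≤ 1)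
    (hml : m ≤ l) :
    (l⁻¹ + m⁻¹) * (l - m) * (l ^ σ - m ^ σ) ≥
      (l ^ (-σ) + m ^ (-σ)) * (l ^ σ - m ^ σ) ^ 2 := by
  have hA : (0:ℝ) < l ^ σ := Real.rpow_pos_of_pos hl σ
  have hB : (0:ℝ) < m ^ σ := Real.rpow_pos_of_pos hm σ
  have hab : m ^ σ ≤ l ^ σ := Real.rpow_le_rpow hm.le hml hσ0.le
  have hr : (1:ℝ) ≤ l / m := (one_le_div hm).2 hml
  have h1 : (l / m) ^ σ ≤ (l / m) ^ (1:ℝ) := Real.rpow_le_rpow_of_exponent_le hr hσ1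
  have h2 : (l / m) ^ (-1:ℝ) ≤ (l / m) ^ (-σ) :=
    Real.rpow_le_rpow_of_exponent_le hr (by linarith)
  have e1 : (l / m) ^ σ = l ^ σ / m ^ σ := Real.div_rpow hl.le hm.le σ
  have e2 : (l / m) ^ (-σ) = m ^ σ / l ^ σ := by
    rw [Real.rpow_neg (by positivity), e1, inv_div]
  have e3 : (l / m) ^ (1:ℝ) = l / m := Real.rpow_one _
  have e4 : (l / m) ^ (-1:ℝ) = m / l := by
    rw [Real.rpow_neg_one, inv_div]
  rw [e1, e3] at h1
  rw [e2, e4] at h2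
  have eA : l ^ (-σ) = (l ^ σ)⁻¹ := by rw [Real.rpow_neg hl.le]
  have eB : m ^ (-σ) = (m ^ σ)⁻¹ := by rw [Real.rpow_neg hm.le]
  have hstep : ((l ^ σ)⁻¹ + (m ^ σ)⁻¹) * (l ^ σ - m ^ σ) ≤ (l⁻¹ + m⁻¹) * (l - m) := by
    have lhs_eq : ((l ^ σ)⁻¹ + (m ^ σ)⁻¹) * (l ^ σ - m ^ σ)
        = l ^ σ / m ^ σ - m ^ σ / l ^ σ := by field_simp; ring
    have rhs_eq : (l⁻¹ + m⁻¹) * (l - m) = l / m - m / l := by field_simp; ring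
    rw [lhs_eq, rhs_eq]; linarith
  rw [eA, eB]
  calc ((l ^ σ)⁻¹ + (m ^ σ)⁻¹) * (l ^ σ - m ^ σ) ^ 2
      = (((l ^ σ)⁻¹ + (m ^ σ)⁻¹) * (l ^ σ - m ^ σ)) * (l ^ σ - m ^ σ) := by ring
    _ ≤ ((l⁻¹ + m⁻¹) * (l - m)) * (l ^ σ - m ^ σ) :=
        mul_le_mul_of_nonneg_right hstep (by linarith)
    _ = (l⁻¹ + m⁻¹) * (l - m) * (l ^ σ - m ^ σ) := by ring

/-- For all `λ, μ > 0` and `0 < σ ≤ 1`: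
`(λ⁻¹ + μ⁻¹) (λ − μ) (λ^σ − μ^σ) ≥ (λ^(−σ) + μ^(−σ)) (λ^σ − μ^σ)²`. -/
theorem stmt_5 (l m σ : ℝ) (hl : 0 < l) (hm : 0 < m) (hσ0 : 0 < σ) (hσ1 : σ ≤ 1) :
    (l⁻¹ + m⁻¹) * (l - m) * (l ^ σ - m ^ σ) ≥
      (l ^ (-σ) + m ^ (-σ)) * (l ^ σ - m ^ σ) ^ 2 := by
  rcases le_total m l with h | h
  · exact key_aux l m σ hl hm hσ0 hσ1 h
  · have := key_aux m l σ hm hl hσ0 hσ1 h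
    nlinarith [this]
end

section
/- Let r ≥ 1, let σ be a real number with 0 < σ ≤ 1, let λ : {1,…,r} → ℝ be a family of positive real numbers, and let η be an r×r Hermitian complex matrix. For indices i, j define m(i,j) = (λ(i)^σ − λ(j)^σ)/(λ(i) − λ(j)) if λ(i) ≠ λ(j), and m(i,j) = σ·λ(i)^(σ−1) if λ(i) = λ(j). Then Σ_{i,j} λ(i)^(−1) · m(i,j) · |η(i,j)|² ≥ Σ_{i,j} λ(i)^(−σ) · m(i,j)² · |η(i,j)|². (This is the matrix inequality (4.1), g^{jk̄}⟨h^{−1}D'h, D'h^σ⟩ ≥ |h^{−σ/2}∇h^σ|², written out pointwise in a unitary eigenbasis of the positive definite matrix h with eigenvalues λ(i), where η represents a derivative of h and m(i,j)·η(i,j) the corresponding derivative of h^σ.) -/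
lemma aux2 (σ : ℝ) (hσ0 : 0 < σ) (hσ1 : σ ≤ 1) (a b : ℝ) (hb : 0 < b) (hba : b < a) :
    a ^ (-σ) * ((a ^ σ - b ^ σ) / (a - b)) ^ 2 + b ^ (-σ) * ((a ^ σ - b ^ σ) / (a - b)) ^ 2 ≤
      a⁻¹ * ((a ^ σ - b ^ σ) / (a - b)) + b⁻¹ * ((a ^ σ - b ^ σ) / (a - b)) := by
  have ha : 0 < a := hb.trans hba
  set m : ℝ := (a ^ σ - b ^ σ) / (a - b) with hm
  have hab : 0 < a - b := sub_pos.mpr hba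
  have hps : b ^ σ < a ^ σ := Real.rpow_lt_rpow hb.le hba hσ0
  have hmpos : 0 < m := div_pos (sub_pos.mpr hps) hab
  have ht : 1 < a / b := (one_lt_div hb).mpr hba
  -- key: (a^σ - b^σ) * (a^(-σ) + b^(-σ)) ≤ (a-b) * (a⁻¹ + b⁻¹)
  have key : (a ^ σ - b ^ σ) * (a ^ (-σ) + b ^ (-σ)) ≤ (a - b) * (a⁻¹ + b⁻¹) := by
    have h1 : a ^ σ * a ^ (-σ) = 1 := by rw [← Real.rpow_add ha]; simp
    have h2 : b ^ σ * b ^ (-σ) = 1 := by rw [← Real.rpow_add hb]; simp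
    have h3 : a ^ σ * b ^ (-σ) = (a / b) ^ σ := by
      rw [Real.div_rpow ha.le hb.le, Real.rpow_neg hb.le, div_eq_mul_inv]
    have h4 : b ^ σ * a ^ (-σ) = (a / b) ^ (-σ) := by
      rw [Real.rpow_neg ha.le, Real.rpow_neg (by positivity : (0:ℝ) ≤ a / b),
        Real.div_rpow ha.le hb.le, inv_div, div_eq_mul_inv]
    have h5 : (a / b) ^ σ ≤ a / b := by
      nth_rewrite 2 [← Real.rpow_one (a / b)]
      exact Real.rpow_le_rpow_of_exponent_le ht.le hσ1
    have h6 : (a / b) ^ (-(1:ℝ)) ≤ (a / b) ^ (-σ) := by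
      exact Real.rpow_le_rpow_of_exponent_le ht.le (by linarith)
    have h7 : (a / b) ^ (-(1:ℝ)) = b / a := by
      rw [Real.rpow_neg_one, inv_div]
    have h8 : (a - b) * (a⁻¹ + b⁻¹) = a / b - b / a := by
      field_simp; ring
    have hexp : (a ^ σ - b ^ σ) * (a ^ (-σ) + b ^ (-σ))
        = (a / b) ^ σ - (a / b) ^ (-σ) := by
      have : (a ^ σ - b ^ σ) * (a ^ (-σ) + b ^ (-σ))
          = a ^ σ * a ^ (-σ) + a ^ σ * b ^ (-σ) - b ^ σ * a ^ (-σ) - b ^ σ * b ^ (-σ) := by ring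
      rw [this, h1, h2, h3, h4]; ring
    rw [hexp, h8]
    have := h7 ▸ h6
    linarith
  -- m * (a^(-σ) + b^(-σ)) ≤ a⁻¹ + b⁻¹
  have step : m * (a ^ (-σ) + b ^ (-σ)) ≤ a⁻¹ + b⁻¹ := by
    rw [hm, div_mul_eq_mul_div, div_le_iff₀ hab]
    linarith [key]
  nlinarith [hmpos, step]

lemma aux1 (σ : ℝ) (hσ0 : 0 < σ) (hσ1 : σ ≤ 1) (a b : ℝ) (ha : 0 < a) (hb : 0 < b) (m : ℝ)
    (hm : m = if a = b then σ * a ^ (σ - 1) else (a ^ σ - b ^ σ) / (a - b)) :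
    a ^ (-σ) * m ^ 2 + b ^ (-σ) * m ^ 2 ≤ a⁻¹ * m + b⁻¹ * m := by
  by_cases hab : a = b
  · subst hab
    rw [hm, if_pos rfl]
    have hc : (0:ℝ) < a ^ (σ - 1) := Real.rpow_pos_of_pos ha _
    have h1 : a ^ (-σ) * a ^ (σ - 1) = a⁻¹ := by
      rw [← Real.rpow_add ha, ← Real.rpow_neg_one a]
      congr 1; ring
    have h2 : (σ * a ^ (σ - 1)) ^ 2 = σ ^ 2 * (a ^ (σ - 1) * a ^ (σ - 1)) := by ring
    rw [h2]
    have h3 : a ^ (-σ) * (σ ^ 2 * (a ^ (σ - 1) * a ^ (σ - 1)))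
        = σ ^ 2 * a ^ (σ - 1) * (a ^ (-σ) * a ^ (σ - 1)) := by ring
    rw [h3, h1]
    have h4 : (0:ℝ) < a⁻¹ := by positivity
    have hσ2 : 0 ≤ σ - σ ^ 2 := by nlinarith
    nlinarith [mul_nonneg hσ2 (mul_pos hc h4).le]
  · rw [hm, if_neg hab]
    rcases lt_or_gt_of_ne hab with h | h
    · have := aux2 σ hσ0 hσ1 b a ha h
      have hflip : (b ^ σ - a ^ σ) / (b - a) = (a ^ σ - b ^ σ) / (a - b) := by
        rw [← neg_sub (a ^ σ), ← neg_sub a, neg_div_neg_eq]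
      rw [hflip] at this
      linarith
    · have := aux2 σ hσ0 hσ1 a b hb h
      linarith


/-- Matrix inequality (4.1) in a unitary eigenbasis: with `m i j` the divided difference of
`x ↦ x^σ` at the eigenvalues `λ i, λ j`, one has
`∑ (λ i)⁻¹ m(i,j) |η(i,j)|² ≥ ∑ (λ i)^(−σ) m(i,j)² |η(i,j)|²`. -/
theorem stmt_6 (r : ℕ) (hr : 1 ≤ r) (σ : ℝ) (hσ0 : 0 < σ) (hσ1 : σ ≤ 1)
    (lam : Fin r → ℝ) (hlam : ∀ i, 0 < lam i)
    (η : Matrix (Fin r) (Fin r) ℂ) (hη : η.IsHermitian)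
    (m : Fin r → Fin r → ℝ)
    (hm : ∀ i j, m i j =
      if lam i = lam j then σ * lam i ^ (σ - 1)
      else (lam i ^ σ - lam j ^ σ) / (lam i - lam j)) :
    ∑ i : Fin r, ∑ j : Fin r, (lam i)⁻¹ * m i j * ‖η i j‖ ^ 2 ≥
      ∑ i : Fin r, ∑ j : Fin r, lam i ^ (-σ) * (m i j) ^ 2 * ‖η i j‖ ^ 2 := by

  have hmsym : ∀ i j, m j i = m i j := by
    intro i j
    rw [hm, hm]
    by_cases h : lam i = lam j
    · rw [if_pos h, if_pos h.symm, h]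
    · rw [if_neg h, if_neg (fun h' => h h'.symm), ← neg_sub (lam i ^ σ), ← neg_sub (lam i),
        neg_div_neg_eq]
  have hnsym : ∀ i j, ‖η j i‖ = ‖η i j‖ := by
    intro i j
    rw [← hη.apply i j]; exact (norm_star _).symm
  -- double each sum and compare termwise
  have key : ∀ i j : Fin r,
      lam i ^ (-σ) * m i j ^ 2 * ‖η i j‖ ^ 2 + lam j ^ (-σ) * m i j ^ 2 * ‖η i j‖ ^ 2 ≤
      (lam i)⁻¹ * m i j * ‖η i j‖ ^ 2 + (lam j)⁻¹ * m i j * ‖η i j‖ ^ 2 := by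
    intro i j
    have h := aux1 σ hσ0 hσ1 (lam i) (lam j) (hlam i) (hlam j) (m i j) (hm i j)
    have hn : (0:ℝ) ≤ ‖η i j‖ ^ 2 := by positivity
    nlinarith [mul_le_mul_of_nonneg_right h hn]
  have hswapL : ∑ i : Fin r, ∑ j : Fin r, (lam i)⁻¹ * m i j * ‖η i j‖ ^ 2
      = ∑ i : Fin r, ∑ j : Fin r, (lam j)⁻¹ * m i j * ‖η i j‖ ^ 2 := by
    rw [Finset.sum_comm]
    refine Finset.sum_congr rfl fun i _ => Finset.sum_congr rfl fun j _ => ?_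
    rw [hmsym, hnsym]
  have hswapR : ∑ i : Fin r, ∑ j : Fin r, lam i ^ (-σ) * m i j ^ 2 * ‖η i j‖ ^ 2
      = ∑ i : Fin r, ∑ j : Fin r, lam j ^ (-σ) * m i j ^ 2 * ‖η i j‖ ^ 2 := by
    rw [Finset.sum_comm]
    refine Finset.sum_congr rfl fun i _ => Finset.sum_congr rfl fun j _ => ?_
    rw [hmsym, hnsym]
  have hdouble : 2 * ∑ i : Fin r, ∑ j : Fin r, lam i ^ (-σ) * m i j ^ 2 * ‖η i j‖ ^ 2 ≤
      2 * ∑ i : Fin r, ∑ j : Fin r, (lam i)⁻¹ * m i j * ‖η i j‖ ^ 2 := by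
    calc 2 * ∑ i : Fin r, ∑ j : Fin r, lam i ^ (-σ) * m i j ^ 2 * ‖η i j‖ ^ 2
        = ∑ i : Fin r, ∑ j : Fin r,
            (lam i ^ (-σ) * m i j ^ 2 * ‖η i j‖ ^ 2 + lam j ^ (-σ) * m i j ^ 2 * ‖η i j‖ ^ 2) := by
          rw [two_mul]
          nth_rewrite 2 [hswapR]
          rw [← Finset.sum_add_distrib]
          exact Finset.sum_congr rfl fun i _ => (Finset.sum_add_distrib).symm
      _ ≤ ∑ i : Fin r, ∑ j : Fin r,
            ((lam i)⁻¹ * m i j * ‖η i j‖ ^ 2 + (lam j)⁻¹ * m i j * ‖η i j‖ ^ 2) :=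
          Finset.sum_le_sum fun i _ => Finset.sum_le_sum fun j _ => key i j
      _ = 2 * ∑ i : Fin r, ∑ j : Fin r, (lam i)⁻¹ * m i j * ‖η i j‖ ^ 2 := by
          rw [two_mul]
          nth_rewrite 2 [hswapL]
          rw [← Finset.sum_add_distrib]
          exact Finset.sum_congr rfl fun i _ => Finset.sum_add_distrib
  linarith
end

section
/- Let M, Y : ℝ → ℝ be differentiable on [0,∞), let C > 0 be a constant, and suppose: M is bounded below on [0,∞); Y(t) ≥ 0 for all t ≥ 0; Y′(t) ≤ 0 for all t ≥ 0; and Y(t) ≤ −M′(t) − C·Y′(t) for all t ≥ 0. Then Y(t) → 0 as t → ∞. (This is the full analytic content of the Gauduchon case of the L² convergence proposition: the finiteness of ∫₀^∞ Y dt together with Y′(t) = −2‖D′(ΛF_θ)‖²_{L²} ≤ 0 implies Y(t) → 0 as t → ∞.) -/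
/-! If `Y` did not tend to `0`, then, being nonincreasing, it would stay above some `ε > 0`,
and the hypothesis would give `(M + C Y)′ ≤ -Y ≤ -ε`. But `M + C Y` is bounded below on
`[0, ∞)`, since `M` is and `0 ≤ Y ≤ Y 0` there, and a function with derivative at most `-ε`
on a half-line is not. -/

open Set Filter Topology

theorem sub_le_mul_sub_of_deriv_le_of_le {f : ℝ → ℝ} {a c : ℝ}
    (hf : ∀ t, a ≤ t → DifferentiableAt ℝ f t) (hf' : ∀ t, a ≤ t → deriv f t ≤ c)
    {s t : ℝ} (hs : a ≤ s) (hst : s ≤ t) : f t - f s ≤ c * (t - s) :=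
  (convex_Ici a).image_sub_le_mul_sub_of_deriv_le
    (fun t ht => (hf t ht).continuousAt.continuousWithinAt)
    (fun t ht => (hf t (interior_subset ht)).differentiableWithinAt)
    (fun t ht => hf' t (interior_subset ht)) s hs t (hs.trans hst) hst

theorem antitoneOn_Ici_of_deriv_nonpos {f : ℝ → ℝ} {a : ℝ}
    (hf : ∀ t, a ≤ t → DifferentiableAt ℝ f t) (hf' : ∀ t, a ≤ t → deriv f t ≤ 0) :
    AntitoneOn f (Ici a) := fun s hs t _ hst => by
  simpa [sub_nonpos] using sub_le_mul_sub_of_deriv_le_of_le hf hf' hs hst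

theorem not_bddBelow_of_deriv_le_neg {f : ℝ → ℝ} {a ε : ℝ} (hε : 0 < ε)
    (hf : ∀ t, a ≤ t → DifferentiableAt ℝ f t) (hf' : ∀ t, a ≤ t → deriv f t ≤ -ε) :
    ¬ BddBelow (f '' Ici a) := by
  rintro ⟨B, hB⟩
  set t := a + (|f a - B| + 1) / ε
  have hat : a ≤ t := le_add_of_nonneg_right (by positivity)
  have hdrop : -ε * (t - a) = -(|f a - B| + 1) := by
    simp only [t, add_sub_cancel_left]; field_simp
  have := sub_le_mul_sub_of_deriv_le_of_le hf hf' le_rfl hat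
  have := hB (mem_image_of_mem f (mem_Ici.2 hat))
  linarith [le_abs_self (f a - B)]

theorem tendsto_zero_of_antitoneOn_Ici {f : ℝ → ℝ} {a : ℝ} (hanti : AntitoneOn f (Ici a))
    (hnonneg : ∀ t, a ≤ t → 0 ≤ f t) (hsmall : ∀ ε > 0, ∃ t, a ≤ t ∧ f t < ε) :
    Tendsto f atTop (𝓝 0) := by
  refine tendsto_order.2 ⟨fun b hb => ?_, fun ε hε => ?_⟩
  · filter_upwards [eventually_ge_atTop a] with t ht
    exact hb.trans_le (hnonneg t ht)
  · obtain ⟨T, haT, hT⟩ := hsmall ε hε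
    filter_upwards [eventually_ge_atTop T] with t hTt
    exact (hanti haT (haT.trans hTt) hTt).trans_lt hT

theorem stmt_9_general (M Y : ℝ → ℝ) (C : ℝ)
    (hMdiff : ∀ t : ℝ, 0 ≤ t → DifferentiableAt ℝ M t)
    (hYdiff : ∀ t : ℝ, 0 ≤ t → DifferentiableAt ℝ Y t)
    (hMbdd : ∃ B : ℝ, ∀ t : ℝ, 0 ≤ t → B ≤ M t)
    (hYnonneg : ∀ t : ℝ, 0 ≤ t → 0 ≤ Y t)
    (hYderiv : ∀ t : ℝ, 0 ≤ t → deriv Y t ≤ 0)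
    (hineq : ∀ t : ℝ, 0 ≤ t → Y t ≤ -deriv M t - C * deriv Y t) :
    Filter.Tendsto Y Filter.atTop (nhds 0) := by
  have hYanti := antitoneOn_Ici_of_deriv_nonpos hYdiff hYderiv
  refine tendsto_zero_of_antitoneOn_Ici hYanti hYnonneg fun ε hε => ?_
  by_contra! hYgeE
  obtain ⟨B, hB⟩ := hMbdd
  have hF : ∀ t, 0 ≤ t → HasDerivAt (fun t => M t + C * Y t) (deriv M t + C * deriv Y t) t :=
    fun t ht => (hMdiff t ht).hasDerivAt.add ((hYdiff t ht).hasDerivAt.const_mul C)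
  refine not_bddBelow_of_deriv_le_neg hε (fun t ht => (hF t ht).differentiableAt)
    (fun t ht => ?_) ⟨B - |C| * Y 0, ?_⟩
  · rw [(hF t ht).deriv]
    linarith [hineq t ht, hYgeE t ht]
  · rintro _ ⟨t, ht, rfl⟩
    have hCY : -(|C| * Y 0) ≤ C * Y t := by
      calc -(|C| * Y 0) ≤ -(|C| * Y t) := by
            gcongr; exact hYanti self_mem_Ici ht ht
        _ = -|C * Y t| := by rw [abs_mul, abs_of_nonneg (hYnonneg t ht)]
        _ ≤ C * Y t := neg_abs_le _
    linarith [hB t ht]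

/-- If `M` is bounded below on `[0,∞)`, `Y ≥ 0` and `Y′ ≤ 0` there, and `Y ≤ −M′ − C·Y′` there
(with `C > 0`, both functions differentiable on `[0,∞)`), then `Y(t) → 0` as `t → ∞`. -/
theorem stmt_9 (M Y : ℝ → ℝ) (C : ℝ) (hC : 0 < C)
    (hMdiff : ∀ t : ℝ, 0 ≤ t → DifferentiableAt ℝ M t)
    (hYdiff : ∀ t : ℝ, 0 ≤ t → DifferentiableAt ℝ Y t)
    (hMbdd : ∃ B : ℝ, ∀ t : ℝ, 0 ≤ t → B ≤ M t)
    (hYnonneg : ∀ t : ℝ, 0 ≤ t → 0 ≤ Y t)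
    (hYderiv : ∀ t : ℝ, 0 ≤ t → deriv Y t ≤ 0)
    (hineq : ∀ t : ℝ, 0 ≤ t → Y t ≤ -deriv M t - C * deriv Y t) :
    Filter.Tendsto Y Filter.atTop (nhds 0) :=
  stmt_9_general M Y C hMdiff hYdiff hMbdd hYnonneg hYderiv hineq
end
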